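/- arXiv:1707.01846 — 4 statements merged into one kernel-verified Lean document; each statement's English description precedes it below -/
import Mathlib

section
/- Let t₁ ≥ t₂ ≥ ... ≥ t_{2M} be nonnegative reals. Among all partitions of {1,...,2M} into M unordered pairs, the partition {(1,2M), (2,2M−1), ..., (M,M+1)} maximizes the sum over pairs (i,j) of log₂(1 + t_i + t_j). -/
/-!
Encode a pairing of the users as a fixed-point-free involution `π` of `Fin (2M)`; its total rate,
counted twice, is `∑ z, G z (π z)` with `G i j = log₂ (1 + t i + t j)`. Since
`(1 + a + d) (1 + b + c) - (1 + a + c) (1 + b + d) = (a - b) (c - d)`, `G` is a Monge array when `t`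
is antitone. If `k < M` is the first index with `π k ≠ rev k`, conjugating `π` by the transposition of
`rev k` and `π k` pairs `k` with `rev k`, keeps the pairs of all smaller indices, and replaces the
pairs `{k, π k}`, `{rev k, π (rev k)}` by `{k, rev k}`, `{π k, π (rev k)}`; the Monge inequality
says this does not lower the rate. After `M` such exchanges `π` is the reversal.
-/

open Finset Equiv

def IsMonge {ι : Type*} [LinearOrder ι] (G : ι → ι → ℝ) : Prop :=
  ∀ ⦃i j k l⦄, i ≤ j → k ≤ l → G i k + G j l ≤ G i l + G j k

theorem isMonge_logb_one_add_add {ι : Type*} [LinearOrder ι] {β : ℝ} (hβ : 1 < β) {t : ι → ℝ}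
    (ht0 : ∀ i, 0 ≤ t i) (ht : Antitone t) :
    IsMonge fun i j => Real.logb β (1 + t i + t j) := by
  intro i j k l hij hkl
  have pos : ∀ p q, 0 < 1 + t p + t q := fun p q => by linarith [ht0 p, ht0 q]
  rw [← Real.logb_mul (pos i k).ne' (pos j l).ne', ← Real.logb_mul (pos i l).ne' (pos j k).ne']
  refine Real.logb_le_logb_of_le hβ (mul_pos (pos i k) (pos j l)) ?_
  nlinarith [mul_nonneg (sub_nonneg.mpr (ht hij)) (sub_nonneg.mpr (ht hkl))]

section Conjugation

variable {ι : Type*} [DecidableEq ι] {π : Perm ι}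

theorem involutive_swap_mul_mul_swap (hπ : Function.Involutive π) (a b : ι) :
    Function.Involutive (swap a b * π * swap a b) := fun z => by
  simp [hπ _]

theorem swap_mul_mul_swap_apply_ne_self (hfix : ∀ z, π z ≠ z) (a b z : ι) :
    (swap a b * π * swap a b) z ≠ z := fun h =>
  hfix (swap a b z) (swap_apply_eq_iff.mp h)

theorem swap_mul_mul_swap_apply_of_ne (hπ : Function.Involutive π) {a b z : ι} (hza : z ≠ a)
    (hzb : z ≠ b) (hza' : z ≠ π a) (hzb' : z ≠ π b) : (swap a b * π * swap a b) z = π z := by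
  rw [Perm.mul_apply, Perm.mul_apply, swap_apply_of_ne_of_ne hza hzb]
  exact swap_apply_of_ne_of_ne (fun h => hza' (by rw [← h, hπ])) (fun h => hzb' (by rw [← h, hπ]))

end Conjugation

theorem IsMonge.sum_le_sum_swap_mul_mul_swap {ι : Type*} [Fintype ι] [LinearOrder ι]
    {G : ι → ι → ℝ} (hG : IsMonge G) {π : Perm ι} (hπ : Function.Involutive π)
    (hfix : ∀ z, π z ≠ z) {i b x y : ι} (hπi : π i = x) (hπb : π b = y) (hib : i ≠ b)
    (hxb : x ≠ b) (hi : i ≤ y) (hx : x ≤ b) :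
    ∑ z, G z (π z) ≤ ∑ z, G z ((swap b x * π * swap b x) z) := by
  have hπx : π x = i := hπi ▸ hπ i
  have hπy : π y = b := hπb ▸ hπ b
  have hix : i ≠ x := hπi ▸ (hfix i).symm
  have hby : b ≠ y := hπb ▸ (hfix b).symm
  have hiy : i ≠ y := fun h => hxb (by rw [← hπi, h, hπy])
  have hxy : x ≠ y := fun h => hib (by rw [← hπx, h, hπy])
  set π' := swap b x * π * swap b x
  have hπ'i : π' i = b := by simp [π', swap_apply_of_ne_of_ne hib hix, hπi]
  have hπ'b : π' b = i := by simp [π', hπx, swap_apply_of_ne_of_ne hib hix]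
  have hπ'x : π' x = y := by simp [π', hπb, swap_apply_of_ne_of_ne hby.symm hxy.symm]
  have hπ'y : π' y = x := by simp [π', hπy, swap_apply_of_ne_of_ne hby.symm hxy.symm]
  rw [← sum_add_sum_compl {i, b, x, y}, ← sum_add_sum_compl {i, b, x, y} (fun z => G z (π' z))]
  gcongr ?_ + ?_
  · rw [sum_insert (by simp [hib, hix, hiy]), sum_insert (by simp [hxb.symm, hby]),
      sum_insert (by simp [hxy]), sum_singleton, sum_insert (by simp [hib, hix, hiy]),
      sum_insert (by simp [hxb.symm, hby]), sum_insert (by simp [hxy]), sum_singleton,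
      hπ'i, hπ'b, hπ'x, hπ'y, hπi, hπb, hπx, hπy]
    linarith [hG hi hx, hG hx hi]
  · refine (sum_congr rfl fun z hz => ?_).ge
    simp only [mem_compl, mem_insert, mem_singleton, not_or] at hz
    rw [swap_mul_mul_swap_apply_of_ne hπ hz.2.1 hz.2.2.1 (by rw [hπb]; exact hz.2.2.2)
      (by rw [hπx]; exact hz.1)]

theorem eq_rev_of_forall_lt_eq_rev {M : ℕ} {π : Perm (Fin (2 * M))} (hπ : Function.Involutive π)
    (hpre : ∀ j : Fin (2 * M), (j : ℕ) < M → π j = j.rev) (j : Fin (2 * M)) : π j = j.rev := by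
  rcases lt_or_ge (j : ℕ) M with hj | hj
  · exact hpre j hj
  · have hrev := hpre j.rev (by rw [Fin.val_rev]; omega)
    rw [Fin.rev_rev] at hrev
    exact hπ.eq_iff.mpr hrev.symm

theorem IsMonge.sum_le_sum_rev_of_forall_lt_eq_rev {M : ℕ} {G : Fin (2 * M) → Fin (2 * M) → ℝ}
    (hG : IsMonge G) {k : ℕ} (hk : k ≤ M) {π : Perm (Fin (2 * M))} (hπ : Function.Involutive π)
    (hfix : ∀ z, π z ≠ z) (hpre : ∀ j : Fin (2 * M), (j : ℕ) < k → π j = j.rev) :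
    ∑ z, G z (π z) ≤ ∑ z, G z z.rev := by
  induction hk using Nat.decreasingInduction generalizing π with
  | self => exact (sum_congr rfl fun j _ => by rw [eq_rev_of_forall_lt_eq_rev hπ hpre j]).le
  | of_succ k hk ih =>
    set i : Fin (2 * M) := ⟨k, by omega⟩
    by_cases hmatch : π i = i.rev
    · refine ih hπ hfix fun j hj => ?_
      rcases Nat.lt_succ_iff_lt_or_eq.mp hj with hj | hj
      · exact hpre j hj
      · rw [show j = i from Fin.ext hj, hmatch]
    set b := i.rev
    set x := π i
    set y := π b
    have hπx : π x = i := hπ i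
    have hπy : π y = b := hπ b
    have hib : i ≠ b := Fin.ne_of_val_ne (by simp only [b, Fin.val_rev, i]; omega)
    have hi : i ≤ y := by
      by_contra! h
      exact h.ne (Fin.rev_injective ((hpre y h).symm.trans hπy))
    have hx : x ≤ b := by
      by_contra! h
      have hxi := hpre x.rev (Fin.rev_lt_iff.mp h)
      rw [Fin.rev_rev, hπ.eq_iff, hπx] at hxi
      exact h.ne' (by rw [← Fin.rev_rev x, hxi])
    refine (hG.sum_le_sum_swap_mul_mul_swap hπ hfix rfl rfl hib hmatch hi hx).trans
      (ih (involutive_swap_mul_mul_swap hπ b x) (swap_mul_mul_swap_apply_ne_self hfix b x)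
        fun j hj => ?_)
    rcases Nat.lt_succ_iff_lt_or_eq.mp hj with hj | hj
    · have hjb : j ≠ b := Fin.ne_of_val_ne (by simp only [b, Fin.val_rev, i]; omega)
      have hjx : j ≠ x := fun h => hjb (by
        have hj' := hpre j hj
        rw [h, hπx] at hj'
        rw [h, ← Fin.rev_rev x, ← hj'])
      have hjy : j ≠ y := fun h => by
        have hj' := hpre j hj
        rw [h, hπy, Fin.rev_eq_iff, Fin.rev_rev] at hj'
        exact absurd (congrArg Fin.val (h.trans hj'.symm)) (by simp only [i]; omega)
      have hji : j ≠ i := Fin.ne_of_val_ne (by simp only [i]; omega)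
      rw [swap_mul_mul_swap_apply_of_ne hπ hjb hjx hjy (by rwa [hπx]), hpre j hj]
    · have hix : i ≠ x := (hfix i).symm
      rw [show j = i from Fin.ext hj, Perm.mul_apply, Perm.mul_apply,
        swap_apply_of_ne_of_ne hib hix, swap_apply_right]

theorem IsMonge.sum_le_sum_rev {M : ℕ} {G : Fin (2 * M) → Fin (2 * M) → ℝ} (hG : IsMonge G)
    {π : Perm (Fin (2 * M))} (hπ : Function.Involutive π) (hfix : ∀ z, π z ≠ z) :
    ∑ z, G z (π z) ≤ ∑ z, G z z.rev :=
  hG.sum_le_sum_rev_of_forall_lt_eq_rev M.zero_le hπ hfix fun _ h => absurd h (Nat.not_lt_zero _)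

theorem Fin.rev_ne_self {M : ℕ} (k : Fin (2 * M)) : k.rev ≠ k :=
  Fin.ne_of_val_ne (by rw [Fin.val_rev]; omega)

theorem Fin.sum_eq_two_nsmul_of_rev {β : Type*} [AddCommMonoid β] {M : ℕ} (f : Fin (2 * M) → β)
    (hf : ∀ k, f k.rev = f k) : ∑ k, f k = 2 • ∑ m : Fin M, f ⟨m, by omega⟩ := by
  rw [← (finCongr (two_mul M)).symm.sum_comp, Fin.sum_univ_add, two_nsmul]
  congr 1
  rw [← Equiv.sum_comp Fin.revPerm]
  refine Fintype.sum_congr _ _ fun m => ?_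
  rw [← hf]
  congr 1
  ext
  simp only [finCongr_symm, finCongr_apply, revPerm_apply, Fin.val_cast, Fin.val_natAdd, Fin.val_rev]
  omega

/-- For sorted nonnegative SNRs `t 0 ≥ t 1 ≥ ⋯ ≥ t (2M-1)`, the strongest-with-weakest
pairing `{(0,2M-1),(1,2M-2),…}` maximizes the total rate `∑ log₂(1+t_i+t_j)` over all
partitions of the `2M` users into `M` pairs (every pairing is represented by a
permutation `σ`, with pairs `{σ m, σ (2M-1-m)}` for `m < M`). -/
theorem stmt_1 (M : ℕ) (t : Fin (2 * M) → ℝ) (ht0 : ∀ i, 0 ≤ t i)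
    (hsort : ∀ i j : Fin (2 * M), i ≤ j → t j ≤ t i)
    (σ : Equiv.Perm (Fin (2 * M))) :
    ∑ m : Fin M, Real.logb 2
        (1 + t (σ ⟨m, by have := m.isLt; omega⟩) + t (σ ⟨2 * M - 1 - m, by have := m.isLt; omega⟩))
      ≤ ∑ m : Fin M, Real.logb 2
        (1 + t ⟨m, by have := m.isLt; omega⟩ + t ⟨2 * M - 1 - m, by have := m.isLt; omega⟩) := by
  set G : Fin (2 * M) → Fin (2 * M) → ℝ := fun i j => Real.logb 2 (1 + t i + t j)
  have hG : IsMonge G := isMonge_logb_one_add_add one_lt_two ht0 hsort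
  have hGsymm : ∀ i j, G i j = G j i := fun i j => by simp only [G, add_right_comm]
  -- the pairing `{σ m, σ (2M-1-m)}, m < M`, as an involution
  set π := σ.permCongr Fin.revPerm
  have hπ : Function.Involutive π := fun z => by simp [π]
  have hfix : ∀ z, π z ≠ z := fun z h => (σ.symm z).rev_ne_self (by
    rw [← σ.apply_eq_iff_eq]; simpa [π] using h)
  have key : ∑ k, G (σ k) (σ k.rev) ≤ ∑ k, G k k.rev := calc
    ∑ k, G (σ k) (σ k.rev) = ∑ z, G z (π z) := by
      rw [← Equiv.sum_comp σ (fun z => G z (π z))]; simp [π]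
    _ ≤ _ := hG.sum_le_sum_rev hπ hfix
  rw [Fin.sum_eq_two_nsmul_of_rev _ fun k => by rw [Fin.rev_rev, hGsymm],
    Fin.sum_eq_two_nsmul_of_rev _ fun k => by rw [Fin.rev_rev, hGsymm]] at key
  have hrev : ∀ m : Fin M, Fin.rev ⟨m, by omega⟩ = (⟨2 * M - 1 - m, by omega⟩ : Fin (2 * M)) :=
    fun m => Fin.ext (by simp only [Fin.val_rev]; omega)
  simpa [hrev] using key
end

section
/- For any four nonnegative reals w₁ ≥ w₂ ≥ w₃ ≥ w₄, pairing the largest with the smallest is optimal: log₂(1+w₁+w₄) + log₂(1+w₂+w₃) ≥ log₂(1+w₁+w₂) + log₂(1+w₃+w₄), and also log₂(1+w₁+w₄) + log₂(1+w₂+w₃) ≥ log₂(1+w₁+w₃) + log₂(1+w₂+w₄). -/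
lemma aux_log (a b c d : ℝ) (ha : 0 < a) (hb : 0 < b) (hc : 0 < c) (hd : 0 < d)
    (h : a * b ≤ c * d) :
    Real.logb 2 a + Real.logb 2 b ≤ Real.logb 2 c + Real.logb 2 d := by
  rw [← Real.logb_mul ha.ne' hb.ne', ← Real.logb_mul hc.ne' hd.ne']
  exact Real.logb_le_logb_of_le (by norm_num) (mul_pos ha hb) h

/-- Exchange argument: for sorted nonnegative SNRs `w₁ ≥ w₂ ≥ w₃ ≥ w₄`, pairing the
largest with the smallest beats both alternative pairings. -/
theorem stmt_3 (w1 w2 w3 w4 : ℝ) (h4 : 0 ≤ w4) (h43 : w4 ≤ w3) (h32 : w3 ≤ w2)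
    (h21 : w2 ≤ w1) :
    Real.logb 2 (1 + w1 + w2) + Real.logb 2 (1 + w3 + w4)
        ≤ Real.logb 2 (1 + w1 + w4) + Real.logb 2 (1 + w2 + w3) ∧
    Real.logb 2 (1 + w1 + w3) + Real.logb 2 (1 + w2 + w4)
        ≤ Real.logb 2 (1 + w1 + w4) + Real.logb 2 (1 + w2 + w3) := by
  have h3 : 0 ≤ w3 := h4.trans h43
  have h2 : 0 ≤ w2 := h3.trans h32
  have h1 : 0 ≤ w1 := h2.trans h21
  constructor
  · apply aux_log <;> try positivity
    nlinarith [mul_nonneg (sub_nonneg.2 (h32.trans h21)) (sub_nonneg.2 h43),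
      mul_nonneg (sub_nonneg.2 h21) (sub_nonneg.2 h43)]
  · apply aux_log <;> try positivity
    nlinarith [mul_nonneg (sub_nonneg.2 h21) (sub_nonneg.2 h43)]
end

section
/- Let A, B be K×K Hermitian matrices with A positive semidefinite and B positive definite. Then for every 2×K complex matrix X with X B X† invertible, det(I + X A X† (X B X†)^{−1}) ≤ (1+λ₁)(1+λ₂), where λ₁ ≥ λ₂ are the two largest eigenvalues of B^{−1/2} A B^{−1/2}. -/
open Matrix
open scoped ComplexOrder

/-- The square root of a positive semidefinite matrix, as defined in the older Mathlib
(removed since). -/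
noncomputable def Matrix.PosSemidef.sqrt {n : Type*} [Fintype n] [DecidableEq n]
    {𝕜 : Type*} [RCLike 𝕜] {A : Matrix n n 𝕜} (hA : A.PosSemidef) : Matrix n n 𝕜 :=
  hA.1.eigenvectorUnitary.1 * diagonal ((↑) ∘ (√·) ∘ hA.1.eigenvalues) *
    (star hA.1.eigenvectorUnitary : Matrix n n 𝕜)

/-
Whitening by `S = B^{1/2}` turns `X A Xᴴ` and `X B Xᴴ` into `Y C Yᴴ` and `Y Yᴴ` with `Y = X S`,
so the determinant is `det M / det Q` for `M = Y (1 + C) Yᴴ` and `Q = Y Yᴴ`. By the spectral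
theorem, `vᴴ M v ≤ (1 + λ₁) vᴴ Q v` for all `v ∈ ℂ²`, and `wᴴ M w ≤ (1 + λ₂) wᴴ Q w` for a nonzero
`w` with `Yᴴ w` orthogonal to the top eigenvector of `C`. Completing `w` to a `Q`-orthogonal basis
`(w, w')` of `ℂ²` and comparing the diagonals of the two Gram matrices in that basis
(`det ≤` product of diagonal entries for a Hermitian `2 × 2` matrix) gives
`det M ≤ (1 + λ₁)(1 + λ₂) det Q`.
-/

namespace Matrix.PosSemidef

variable {n 𝕜 : Type*} [Fintype n] [DecidableEq n] [RCLike 𝕜] {A : Matrix n n 𝕜}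

lemma posSemidef_sqrt (hA : A.PosSemidef) : hA.sqrt.PosSemidef := by
  have hd : (diagonal (((↑) : ℝ → 𝕜) ∘ (√·) ∘ hA.1.eigenvalues)).PosSemidef :=
    posSemidef_diagonal_iff.mpr fun i => by simp [Real.sqrt_nonneg]
  exact hd.mul_mul_conjTranspose_same (hA.1.eigenvectorUnitary : Matrix n n 𝕜)

lemma sqrt_mul_self (hA : A.PosSemidef) : hA.sqrt * hA.sqrt = A := by
  set U : Matrix n n 𝕜 := ↑hA.1.eigenvectorUnitary
  set D := diagonal (((↑) : ℝ → 𝕜) ∘ (√·) ∘ hA.1.eigenvalues)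
  have hUU : star U * U = 1 := Unitary.coe_star_mul_self _
  have hDD : D * D = diagonal (RCLike.ofReal ∘ hA.1.eigenvalues) := by
    rw [diagonal_mul_diagonal]
    congr 1
    funext i
    simp only [Function.comp_apply, ← RCLike.ofReal_mul,
      Real.mul_self_sqrt (hA.eigenvalues_nonneg i)]
  conv_rhs => rw [hA.1.spectral_theorem, Unitary.conjStarAlgAut_apply, ← hDD]
  calc U * D * star U * (U * D * star U) = U * D * (star U * U) * D * star U := by
        simp only [Matrix.mul_assoc]
    _ = U * (D * D) * star U := by rw [hUU, Matrix.mul_one, Matrix.mul_assoc U]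

lemma isUnit_det_sqrt (hA : A.PosSemidef) (h : IsUnit A.det) : IsUnit hA.sqrt.det := by
  rw [← hA.sqrt_mul_self, det_mul] at h
  exact isUnit_of_mul_isUnit_left h

end Matrix.PosSemidef

namespace Matrix

theorem dotProduct_mulVec_mul_mul_conjTranspose {m n R : Type*} [Fintype m] [Fintype n]
    [CommSemiring R] [StarRing R] (Y : Matrix m n R) (C : Matrix n n R) (v : m → R) :
    star v ⬝ᵥ ((Y * C * Yᴴ) *ᵥ v) = star (Yᴴ *ᵥ v) ⬝ᵥ (C *ᵥ (Yᴴ *ᵥ v)) := by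
  rw [← mulVec_mulVec, ← mulVec_mulVec, dotProduct_mulVec, star_mulVec, conjTranspose_conjTranspose]

namespace IsHermitian

variable {n : Type*} [Fintype n] [DecidableEq n] {C : Matrix n n ℂ} (hC : C.IsHermitian)
include hC

theorem re_dotProduct_mulVec_le (c : ℝ) (u : n → ℂ)
    (h : ∀ k, star ⇑(hC.eigenvectorBasis k) ⬝ᵥ u ≠ 0 → hC.eigenvalues k ≤ c) :
    (star u ⬝ᵥ (C *ᵥ u)).re ≤ c * (star u ⬝ᵥ u).re := by
  set U : Matrix n n ℂ := ↑hC.eigenvectorUnitary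
  set y := star U *ᵥ u
  have hu : u = Uᴴᴴ *ᵥ y := by
    rw [conjTranspose_conjTranspose, mulVec_mulVec,
      mem_unitaryGroup_iff.mp hC.eigenvectorUnitary.2, one_mulVec]
  have hy : ∀ k, y k = star ⇑(hC.eigenvectorBasis k) ⬝ᵥ u := fun k => by
    simp [y, U, mulVec, dotProduct, mul_comm]
  have hdiag : Uᴴ * C * Uᴴᴴ = diagonal (RCLike.ofReal ∘ hC.eigenvalues) := by
    rw [conjTranspose_conjTranspose, ← hC.conjStarAlgAut_star_eigenvectorUnitary,
      Unitary.conjStarAlgAut_star_apply]; rfl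
  have hquad : star u ⬝ᵥ (C *ᵥ u) = ∑ k, (hC.eigenvalues k : ℂ) * Complex.normSq (y k) := by
    rw [hu, ← dotProduct_mulVec_mul_mul_conjTranspose, hdiag]
    simp [dotProduct, mulVec_diagonal, mul_left_comm, Complex.normSq_eq_conj_mul_self]
  have hnorm : star u ⬝ᵥ u = ∑ k, (Complex.normSq (y k) : ℂ) := by
    have hU : Uᴴ * 1 * Uᴴᴴ = 1 := by
      rw [Matrix.mul_one, conjTranspose_conjTranspose]; exact Unitary.coe_star_mul_self _
    have := dotProduct_mulVec_mul_mul_conjTranspose Uᴴ 1 y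
    rw [hU, one_mulVec, one_mulVec, ← hu] at this
    rw [← this]; simp [dotProduct, Complex.normSq_eq_conj_mul_self]
  rw [hquad, hnorm, Complex.re_sum, Complex.re_sum, Finset.mul_sum]
  refine Finset.sum_le_sum fun k _ => ?_
  simp only [← Complex.ofReal_mul, Complex.ofReal_re]
  by_cases hk : y k = 0
  · simp [hk]
  · exact mul_le_mul_of_nonneg_right (h k (hy k ▸ hk)) (Complex.normSq_nonneg _)

end IsHermitian

theorem exists_ne_zero_dotProduct_eq_zero_of_fin_two {K : Type*} [Field K]
    (a : Fin 2 → K) : ∃ w ≠ 0, a ⬝ᵥ w = 0 := by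
  obtain ⟨w, hw, hMw⟩ := exists_mulVec_eq_zero_iff.mpr
    (det_zero_of_row_eq (M := Matrix.of ![a, a]) (i := 0) (j := 1) (by decide) rfl)
  exact ⟨w, hw, congrFun hMw 0⟩

theorem IsHermitian.re_det_fin_two {H : Matrix (Fin 2) (Fin 2) ℂ} (hH : H.IsHermitian) :
    H.det.re = (H 0 0).re * (H 1 1).re - Complex.normSq (H 0 1) := by
  have h10 : H 1 0 = star (H 0 1) := (hH.apply 1 0).symm
  have h00 : (H 0 0).im = 0 := Complex.conj_eq_iff_im.mp (hH.apply 0 0)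
  simp [det_fin_two, h10, h00, Complex.normSq_apply]

theorem conjTranspose_mul_mul_apply {m n R : Type*} [Fintype m] [Fintype n]
    [CommSemiring R] [StarRing R] (W : Matrix n m R) (H : Matrix n n R) (a b : m) :
    (Wᴴ * H * W) a b = star (Wᵀ a) ⬝ᵥ (H *ᵥ Wᵀ b) := by
  simp only [mul_apply, dotProduct, mulVec, Finset.mul_sum, Finset.sum_mul, mul_assoc]
  rw [Finset.sum_comm]
  rfl

theorem re_det_conjTranspose_mul_mul {n : Type*} [Fintype n] [DecidableEq n]
    (W H : Matrix n n ℂ) : (Wᴴ * H * W).det.re = Complex.normSq W.det * H.det.re := by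
  rw [det_mul, det_mul, det_conjTranspose, mul_comm, ← mul_assoc, Complex.star_def,
    Complex.mul_conj, Complex.re_ofReal_mul]

theorem re_det_le_of_re_dotProduct_mulVec_le {M Q : Matrix (Fin 2) (Fin 2) ℂ}
    (hM : M.PosSemidef) (hQ : Q.PosDef) {b c : ℝ}
    (hb : ∀ v, (star v ⬝ᵥ (M *ᵥ v)).re ≤ b * (star v ⬝ᵥ (Q *ᵥ v)).re)
    {w : Fin 2 → ℂ} (hw : w ≠ 0)
    (hc : (star w ⬝ᵥ (M *ᵥ w)).re ≤ c * (star w ⬝ᵥ (Q *ᵥ w)).re) :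
    M.det.re ≤ b * c * Q.det.re := by
  obtain ⟨w', hw', hQ01⟩ := exists_ne_zero_dotProduct_eq_zero_of_fin_two (star (Q *ᵥ w))
  rw [star_mulVec, ← dotProduct_mulVec, hQ.1.eq] at hQ01
  -- the columns `w, w'` of `W` are `Q`-orthogonal, so `Wᴴ Q W` is diagonal
  set W : Matrix (Fin 2) (Fin 2) ℂ := (of ![w, w'])ᵀ
  have hW : ∀ H a b, (Wᴴ * H * W) a b = star (![w, w'] a) ⬝ᵥ (H *ᵥ ![w, w'] b) :=
    fun H a b => conjTranspose_mul_mul_apply W H a b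
  have hQW : (Wᴴ * Q * W).det.re
      = (star w ⬝ᵥ (Q *ᵥ w)).re * (star w' ⬝ᵥ (Q *ᵥ w')).re := by
    rw [(isHermitian_conjTranspose_mul_mul W hQ.1).re_det_fin_two, hW, hW, hW]
    simp only [cons_val_zero, cons_val_one, hQ01, map_zero, sub_zero]
  have hMW : (Wᴴ * M * W).det.re
      ≤ (star w ⬝ᵥ (M *ᵥ w)).re * (star w' ⬝ᵥ (M *ᵥ w')).re := by
    rw [(isHermitian_conjTranspose_mul_mul W hM.1).re_det_fin_two, hW, hW, hW]
    simpa using Complex.normSq_nonneg _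
  have hdetW : 0 < Complex.normSq W.det := by
    have hpos : 0 < (Wᴴ * Q * W).det.re := by
      rw [hQW]; exact mul_pos (hQ.re_dotProduct_pos hw) (hQ.re_dotProduct_pos hw')
    rw [re_det_conjTranspose_mul_mul] at hpos
    exact pos_of_mul_pos_left hpos (Complex.nonneg_iff.mp hQ.det_pos.le).1
  refine le_of_mul_le_mul_left ?_ hdetW
  rw [← re_det_conjTranspose_mul_mul, mul_left_comm, ← re_det_conjTranspose_mul_mul, hQW]
  calc (Wᴴ * M * W).det.re
      ≤ (star w ⬝ᵥ (M *ᵥ w)).re * (star w' ⬝ᵥ (M *ᵥ w')).re := hMW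
    _ ≤ (c * (star w ⬝ᵥ (Q *ᵥ w)).re) * (b * (star w' ⬝ᵥ (Q *ᵥ w')).re) :=
      mul_le_mul hc (hb w') (hM.re_dotProduct_nonneg w')
        ((hM.re_dotProduct_nonneg w).trans hc)
    _ = b * c * ((star w ⬝ᵥ (Q *ᵥ w)).re * (star w' ⬝ᵥ (Q *ᵥ w')).re) := by ring

theorem re_det_one_add_mul_mul_conjTranspose_mul_inv_le {n : Type*} [Fintype n] [DecidableEq n]
    {C : Matrix n n ℂ} (hC : C.PosSemidef) (Y : Matrix (Fin 2) n ℂ) (hY : IsUnit (Y * Yᴴ).det)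
    {l₁ l₂ : ℝ} {i : n} (h₁ : ∀ k, hC.1.eigenvalues k ≤ l₁)
    (h₂ : ∀ k, k ≠ i → hC.1.eigenvalues k ≤ l₂) :
    (1 + Y * C * Yᴴ * (Y * Yᴴ)⁻¹).det.re ≤ (1 + l₁) * (1 + l₂) := by
  set Q := Y * Yᴴ
  set M := Y * (1 + C) * Yᴴ
  have hQ : Q.PosDef :=
    (posSemidef_self_mul_conjTranspose Y).posDef_iff_det_ne_zero.mpr hY.ne_zero
  have hM : M.PosSemidef := (PosSemidef.one.add hC).mul_mul_conjTranspose_same Y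
  have hQv : ∀ v, star v ⬝ᵥ (Q *ᵥ v) = star (Yᴴ *ᵥ v) ⬝ᵥ (Yᴴ *ᵥ v) := fun v => by
    simpa using dotProduct_mulVec_mul_mul_conjTranspose Y 1 v
  have hMQ : ∀ (l : ℝ) v,
      (∀ k, star ⇑(hC.1.eigenvectorBasis k) ⬝ᵥ (Yᴴ *ᵥ v) ≠ 0 → hC.1.eigenvalues k ≤ l) →
      (star v ⬝ᵥ (M *ᵥ v)).re ≤ (1 + l) * (star v ⬝ᵥ (Q *ᵥ v)).re := by
    intro l v h
    rw [dotProduct_mulVec_mul_mul_conjTranspose, hQv, add_mulVec, one_mulVec, dotProduct_add,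
      Complex.add_re, add_mul, one_mul]
    gcongr
    exact hC.1.re_dotProduct_mulVec_le l _ h
  obtain ⟨w, hw, hwi⟩ :=
    exists_ne_zero_dotProduct_eq_zero_of_fin_two (star (Y *ᵥ hC.1.eigenvectorBasis i))
  rw [star_mulVec, ← dotProduct_mulVec] at hwi
  have hdet : M.det.re ≤ (1 + l₁) * (1 + l₂) * Q.det.re :=
    re_det_le_of_re_dotProduct_mulVec_le hM hQ (fun v => hMQ l₁ v fun k _ => h₁ k) hw
      (hMQ l₂ w fun k hk => h₂ k (by rintro rfl; exact hk hwi))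
  have hMQinv : 1 + Y * C * Yᴴ * Q⁻¹ = M * Q⁻¹ := by
    have hMsplit : M = Q + Y * C * Yᴴ := by
      simp only [M, Q, Matrix.mul_add, Matrix.add_mul, Matrix.mul_one]
    rw [hMsplit, Matrix.add_mul, mul_nonsing_inv _ hY]
  obtain ⟨hQre, -⟩ := Complex.pos_iff.mp hQ.det_pos
  have hMreal : M.det = (M.det.re : ℂ) :=
    Complex.eq_re_of_ofReal_le (r := 0) (by rw [Complex.ofReal_zero]; exact hM.det_nonneg)
  have hQreal : Q.det = (Q.det.re : ℂ) :=
    Complex.eq_re_of_ofReal_le (r := 0) (by rw [Complex.ofReal_zero]; exact hQ.det_pos.le)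
  rwa [hMQinv, det_mul, det_nonsing_inv, Ring.inverse_eq_inv', hMreal, hQreal,
    ← Complex.ofReal_inv, ← Complex.ofReal_mul, Complex.ofReal_re, ← div_eq_mul_inv,
    div_le_iff₀ hQre]

end Matrix

theorem stmt_5_general (K : ℕ) (A B : Matrix (Fin K) (Fin K) ℂ)
    (hA : A.PosSemidef) (hB : B.PosDef)
    (C : Matrix (Fin K) (Fin K) ℂ)
    (hCdef : C = (hB.posSemidef.sqrt)⁻¹ * A * (hB.posSemidef.sqrt)⁻¹)
    (hC : C.IsHermitian) (l1 l2 : ℝ) (hord : l2 ≤ l1)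
    (i j : Fin K)
    (hi : hC.eigenvalues i = l1) (hj : hC.eigenvalues j = l2)
    (htop : ∀ k, k ≠ i → k ≠ j → hC.eigenvalues k ≤ l2)
    (X : Matrix (Fin 2) (Fin K) ℂ) (hX : IsUnit (X * B * Xᴴ).det) :
    (((1 : Matrix (Fin 2) (Fin 2) ℂ) + X * A * Xᴴ * (X * B * Xᴴ)⁻¹).det).re
      ≤ (1 + l1) * (1 + l2) := by
  set S := hB.posSemidef.sqrt
  have hSH : Sᴴ = S := hB.posSemidef.posSemidef_sqrt.1
  have hS : IsUnit S.det :=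
    hB.posSemidef.isUnit_det_sqrt ((isUnit_iff_isUnit_det B).mp hB.isUnit)
  have hCpsd : C.PosSemidef := by
    simpa [hCdef, conjTranspose_nonsing_inv, hSH] using hA.mul_mul_conjTranspose_same S⁻¹
  have hXA : X * A * Xᴴ = (X * S) * C * (X * S)ᴴ := by
    rw [hCdef, conjTranspose_mul, hSH]
    simp only [Matrix.mul_assoc, mul_nonsing_inv_cancel_left S _ hS,
      nonsing_inv_mul_cancel_left S _ hS]
  have hXB : X * B * Xᴴ = (X * S) * (X * S)ᴴ := by
    have hSS : S * S = B := hB.posSemidef.sqrt_mul_self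
    rw [conjTranspose_mul, hSH, ← hSS]
    simp only [Matrix.mul_assoc]
  have h₂ : ∀ k, k ≠ i → hC.eigenvalues k ≤ l2 := fun k hki => by
    by_cases hkj : k = j
    · exact hkj ▸ hj.le
    · exact htop k hki hkj
  have h₁ : ∀ k, hC.eigenvalues k ≤ l1 := fun k => by
    by_cases hki : k = i
    · exact hki ▸ hi.le
    · exact (h₂ k hki).trans hord
  rw [hXA, hXB]
  rw [hXB] at hX
  exact Matrix.re_det_one_add_mul_mul_conjTranspose_mul_inv_le hCpsd (X * S) hX h₁ h₂

/-- Upper bound: for `A` Hermitian positive semidefinite and `B` Hermitian positive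
definite, and any `2×K` matrix `X` with `X B Xᴴ` invertible,
`det (I + X A Xᴴ (X B Xᴴ)⁻¹) ≤ (1+λ₁)(1+λ₂)` where `λ₁ ≥ λ₂` are the two largest
eigenvalues of `B^{-1/2} A B^{-1/2}` (the determinant is real; we bound its real part). -/
theorem stmt_5 (K : ℕ) (A B : Matrix (Fin K) (Fin K) ℂ)
    (hA : A.PosSemidef) (hB : B.PosDef)
    (C : Matrix (Fin K) (Fin K) ℂ)
    (hCdef : C = (hB.posSemidef.sqrt)⁻¹ * A * (hB.posSemidef.sqrt)⁻¹)
    (hC : C.IsHermitian) (l1 l2 : ℝ) (hord : l2 ≤ l1)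
    (i j : Fin K) (hij : i ≠ j)
    (hi : hC.eigenvalues i = l1) (hj : hC.eigenvalues j = l2)
    (htop : ∀ k, k ≠ i → k ≠ j → hC.eigenvalues k ≤ l2)
    (X : Matrix (Fin 2) (Fin K) ℂ) (hX : IsUnit (X * B * Xᴴ).det) :
    (((1 : Matrix (Fin 2) (Fin 2) ℂ) + X * A * Xᴴ * (X * B * Xᴴ)⁻¹).det).re
      ≤ (1 + l1) * (1 + l2) :=
  stmt_5_general K A B hA hB C hCdef hC l1 l2 hord i j hi hj htop X hX
end

section
/- For fixed x > 0, the function c ↦ log₂(1 + 2c·log x_small)/log₂(1 + 2c·log x_big) is monotone; more generally, for 0 < a₁ < a₂ the function w(x) = log(1 + a₁x)/log(1 + a₂x) is monotonically increasing on (0,∞), and for a₁ > a₂ > 0 it is monotonically decreasing on (0,∞). -/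
/-! With `u = 1 + a₁x` and `v = 1 + a₂x`, the derivative of `log u / log v` has the sign of
`a₁ v log v - a₂ u log u`. Since `a₁ / a₂ = (u - 1) / (v - 1)`, this is positive exactly when
`φ(u) < φ(v)` for `φ(t) = t log t / (t - 1)`, and `φ` is increasing on `(1, ∞)` because
`φ'(t) = (t - 1 - log t) / (t - 1)²`. The decreasing case is the reciprocal of the increasing one. -/

open Real Set

lemma strictMonoOn_Ioi_of_hasDerivAt_pos {a : ℝ} {f f' : ℝ → ℝ}
    (hf : ∀ x ∈ Ioi a, HasDerivAt f (f' x) x) (hf' : ∀ x ∈ Ioi a, 0 < f' x) :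
    StrictMonoOn f (Ioi a) :=
  strictMonoOn_of_hasDerivWithinAt_pos (convex_Ioi a)
    (fun x hx => (hf x hx).continuousAt.continuousWithinAt)
    (fun x hx => (hf x (interior_subset hx)).hasDerivWithinAt)
    (fun x hx => hf' x (interior_subset hx))

lemma strictMonoOn_mul_log_div_sub_one :
    StrictMonoOn (fun t : ℝ => t * log t / (t - 1)) (Ioi 1) := by
  refine strictMonoOn_Ioi_of_hasDerivAt_pos
    (f' := fun t => (t - 1 - log t) / (t - 1) ^ 2) (fun t ht => ?_) (fun t ht => ?_)
  · have ht : 1 < t := ht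
    refine (((hasDerivAt_id' t).mul (hasDerivAt_log (by positivity))).div
      ((hasDerivAt_id' t).sub_const 1) (sub_ne_zero.2 ht.ne')).congr_deriv ?_
    simp only [Pi.mul_apply]
    field_simp
    ring
  · have ht : 1 < t := ht
    have := log_lt_sub_one_of_pos (by positivity) ht.ne'
    exact div_pos (by linarith) (by nlinarith)

lemma hasDerivAt_log_one_add_mul {a x : ℝ} (h : 0 < 1 + a * x) :
    HasDerivAt (fun x => log (1 + a * x)) (a / (1 + a * x)) x := by
  simpa using (((hasDerivAt_id x).const_mul a).const_add 1).log h.ne'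

lemma strictMonoOn_log_one_add_mul_div_log_one_add_mul {a₁ a₂ : ℝ} (h₁ : 0 < a₁)
    (h₁₂ : a₁ < a₂) :
    StrictMonoOn (fun x => log (1 + a₁ * x) / log (1 + a₂ * x)) (Ioi 0) := by
  refine strictMonoOn_Ioi_of_hasDerivAt_pos (f' := fun x =>
      (a₁ * ((1 + a₂ * x) * log (1 + a₂ * x)) - a₂ * ((1 + a₁ * x) * log (1 + a₁ * x))) /
        ((1 + a₁ * x) * (1 + a₂ * x) * log (1 + a₂ * x) ^ 2)) (fun x hx => ?_) (fun x hx => ?_)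
  all_goals
    have hx : 0 < x := hx
    have hu : 1 < 1 + a₁ * x := by nlinarith
    have hv : 1 < 1 + a₂ * x := by nlinarith
  · have hu₀ : 0 < 1 + a₁ * x := by linarith
    have hv₀ : 0 < 1 + a₂ * x := by linarith
    refine ((hasDerivAt_log_one_add_mul hu₀).div (hasDerivAt_log_one_add_mul hv₀)
      (log_pos hv).ne').congr_deriv ?_
    symm
    field_simp
  · have := log_pos hv
    have hφ := strictMonoOn_mul_log_div_sub_one hu hv (by nlinarith)
    simp only [add_sub_cancel_left] at hφ
    rw [div_lt_div_iff₀ (mul_pos h₁ hx) (mul_pos (h₁.trans h₁₂) hx)] at hφ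
    exact div_pos (by nlinarith) (by positivity)

/-- Monotonicity of the ratio of logarithms: for `0 < a₁ < a₂`, the function
`w(x) = log(1+a₁x)/log(1+a₂x)` is monotonically increasing on `(0,∞)`, and for
`a₁ > a₂ > 0` it is monotonically decreasing on `(0,∞)`. -/
theorem stmt_10 (a1 a2 : ℝ) (h1 : 0 < a1) (h2 : 0 < a2) :
    (a1 < a2 → StrictMonoOn (fun x => Real.log (1 + a1 * x) / Real.log (1 + a2 * x))
      (Set.Ioi (0 : ℝ))) ∧
    (a2 < a1 → StrictAntiOn (fun x => Real.log (1 + a1 * x) / Real.log (1 + a2 * x))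
      (Set.Ioi (0 : ℝ))) := by
  refine ⟨strictMonoOn_log_one_add_mul_div_log_one_add_mul h1, fun h21 => ?_⟩
  have hpos : MapsTo (fun x => log (1 + a2 * x) / log (1 + a1 * x)) (Ioi 0) {r | 0 < r} :=
    fun x (hx : 0 < x) => div_pos (log_pos (by nlinarith)) (log_pos (by nlinarith))
  simpa [Function.comp_def] using strictAntiOn_inv_pos.comp_strictMonoOn
    (strictMonoOn_log_one_add_mul_div_log_one_add_mul h2 h21) hpos
end
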